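/- arXiv:2110.13122 — 3 statements merged into one kernel-verified Lean document; each statement's English description precedes it below -/
import Mathlib

section
/- If X is an extremally disconnected Hausdorff space, then c(X) ≤ wL(X)·πχ(X), where πχ(X) is the π-character of X. -/
open Cardinal Set

universe u

section Defs
variable (X : Type u) [TopologicalSpace X]

/-- An open cover of the whole space. -/
def IsOpenCover (𝒰 : Set (Set X)) : Prop := (∀ U ∈ 𝒰, IsOpen U) ∧ ⋃₀ 𝒰 = Set.univ

/-- The cellularity: supremum of cardinalities of pairwise disjoint families of nonempty
open sets, plus `ℵ₀`. -/
noncomputable def cellularity : Cardinal.{u} :=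
  max ℵ₀ (⨆ 𝒰 : {𝒰 : Set (Set X) // (∀ U ∈ 𝒰, IsOpen U ∧ U.Nonempty) ∧
    𝒰.PairwiseDisjoint id}, #𝒰.1)

/-- The weak Lindelöf degree. -/
noncomputable def wLdeg : Cardinal.{u} :=
  sInf {κ | ℵ₀ ≤ κ ∧ ∀ 𝒰 : Set (Set X), IsOpenCover X 𝒰 →
    ∃ 𝒱 ⊆ 𝒰, #𝒱 ≤ κ ∧ Dense (⋃₀ 𝒱)}

/-- The tightness. -/
noncomputable def tightness : Cardinal.{u} :=
  sInf {κ | ℵ₀ ≤ κ ∧ ∀ (A : Set X) (x : X), x ∈ closure A →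
    ∃ B ⊆ A, #B ≤ κ ∧ x ∈ closure B}

/-- The π-character. -/
noncomputable def piCharacter : Cardinal.{u} :=
  sInf {κ | ℵ₀ ≤ κ ∧ ∀ x : X, ∃ 𝒬 : Set (Set X), #𝒬 ≤ κ ∧
    (∀ P ∈ 𝒬, IsOpen P ∧ P.Nonempty) ∧
    ∀ U : Set X, IsOpen U → x ∈ U → ∃ P ∈ 𝒬, P ⊆ U}

/-- The pseudocharacter. -/
noncomputable def pseudoChar : Cardinal.{u} :=
  sInf {κ | ℵ₀ ≤ κ ∧ ∀ x : X, ∃ 𝒱 : Set (Set X), #𝒱 ≤ κ ∧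
    (∀ V ∈ 𝒱, IsOpen V ∧ x ∈ V) ∧ ⋂₀ 𝒱 = {x}}

/-- The closed pseudocharacter. -/
noncomputable def closedPseudoChar : Cardinal.{u} :=
  sInf {κ | ℵ₀ ≤ κ ∧ ∀ x : X, ∃ 𝒱 : Set (Set X), #𝒱 ≤ κ ∧
    (∀ V ∈ 𝒱, IsOpen V ∧ x ∈ V) ∧ (⋂ V ∈ 𝒱, closure V) = {x}}

/-- The density. -/
noncomputable def densityCard : Cardinal.{u} :=
  sInf {κ | ℵ₀ ≤ κ ∧ ∃ D : Set X, #D ≤ κ ∧ Dense D}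

/-- The star of a set `A` with respect to a family `𝒰`. -/
def st (A : Set X) (𝒰 : Set (Set X)) : Set X := ⋃₀ {U | U ∈ 𝒰 ∧ (A ∩ U).Nonempty}

/-- The θ-closure of a set. -/
def thetaClosure (A : Set X) : Set X :=
  {x | ∀ U : Set X, IsOpen U → x ∈ U → (closure U ∩ A).Nonempty}

/-- The θ-density. -/
noncomputable def thetaDensityCard : Cardinal.{u} :=
  sInf {κ | ℵ₀ ≤ κ ∧ ∃ D : Set X, #D ≤ κ ∧ thetaClosure X D = Set.univ}

/-- A discrete family of sets: each point has a neighborhood meeting at most one member. -/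
def IsDiscreteFamily (𝒰 : Set (Set X)) : Prop :=
  ∀ x : X, ∃ V : Set X, IsOpen V ∧ x ∈ V ∧ {U | U ∈ 𝒰 ∧ (V ∩ U).Nonempty}.Subsingleton

/-- Countable discrete cellularity. -/
def CDC : Prop :=
  ∀ 𝒰 : Set (Set X), (∀ U ∈ 𝒰, IsOpen U ∧ U.Nonempty) → IsDiscreteFamily X 𝒰 → 𝒰.Countable

/-- Star-cdc: every open cover has a cdc subspace whose star covers the space. -/
def StarCDC : Prop :=
  ∀ 𝒰 : Set (Set X), IsOpenCover X 𝒰 → ∃ Y : Set X, CDC ↥Y ∧ st X Y 𝒰 = Set.univ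

/-- H-closed space: every open cover has a finite subfamily with dense union. -/
def IsHClosedSpace : Prop :=
  ∀ 𝒰 : Set (Set X), IsOpenCover X 𝒰 → ∃ 𝒱 ⊆ 𝒰, 𝒱.Finite ∧ Dense (⋃₀ 𝒱)

/-- Countable cellularity (ccc). -/
def CCCSpace : Prop :=
  ∀ 𝒰 : Set (Set X), (∀ U ∈ 𝒰, IsOpen U ∧ U.Nonempty) → 𝒰.PairwiseDisjoint id → 𝒰.Countable

/-- Weakly Lindelöf space. -/
def WeaklyLindelof : Prop :=
  ∀ 𝒰 : Set (Set X), IsOpenCover X 𝒰 → ∃ 𝒱 ⊆ 𝒰, 𝒱.Countable ∧ Dense (⋃₀ 𝒱)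

/-- Almost Lindelöf space. -/
def AlmostLindelof : Prop :=
  ∀ 𝒰 : Set (Set X), IsOpenCover X 𝒰 → ∃ 𝒱 ⊆ 𝒰, 𝒱.Countable ∧ (⋃ V ∈ 𝒱, closure V) = Set.univ

/-- A π-base: a family of nonempty open sets such that every nonempty open set contains one. -/
def IsPiBase (ℬ : Set (Set X)) : Prop :=
  (∀ B ∈ ℬ, IsOpen B ∧ B.Nonempty) ∧
  ∀ U : Set X, IsOpen U → U.Nonempty → ∃ B ∈ ℬ, B ⊆ U

/-- Power homogeneous: some power of `X` is homogeneous. -/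
def PowerHomogeneous : Prop :=
  ∃ ι : Type u, ∀ x y : ι → X, ∃ h : (ι → X) ≃ₜ (ι → X), h x = y

/-- A strong `G_δ`-diagonal of rank 2. -/
def HasStrongRank2Diagonal : Prop :=
  ∃ 𝒰 : ℕ → Set (Set X), (∀ n, IsOpenCover X (𝒰 n)) ∧
    ∀ x : X, (⋂ n, closure (st X (st X {x} (𝒰 n)) (𝒰 n))) = {x}

/-- A `G_δ`-diagonal of rank 2. -/
def HasRank2Diagonal : Prop :=
  ∃ 𝒰 : ℕ → Set (Set X), (∀ n, IsOpenCover X (𝒰 n)) ∧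
    ∀ x : X, (⋂ n, st X (st X {x} (𝒰 n)) (𝒰 n)) = {x}

/-- A `G_δ`-diagonal of rank 3. -/
def HasRank3Diagonal : Prop :=
  ∃ 𝒰 : ℕ → Set (Set X), (∀ n, IsOpenCover X (𝒰 n)) ∧
    ∀ x : X, (⋂ n, st X (st X (st X {x} (𝒰 n)) (𝒰 n)) (𝒰 n)) = {x}

/-- Basically disconnected: the closure of every cozero set is open. -/
def BasicallyDisconnected : Prop :=
  ∀ f : C(X, ℝ), IsOpen (closure {x | f x ≠ 0})

end Defs

section AuxProof

open Classical

lemma wLdeg_mem (X : Type u) [TopologicalSpace X] :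
    ℵ₀ ≤ wLdeg X ∧ ∀ 𝒰 : Set (Set X), IsOpenCover X 𝒰 →
      ∃ 𝒱 ⊆ 𝒰, #𝒱 ≤ wLdeg X ∧ Dense (⋃₀ 𝒱) := by
  have hne : {κ : Cardinal.{u} | ℵ₀ ≤ κ ∧ ∀ 𝒰 : Set (Set X), IsOpenCover X 𝒰 →
      ∃ 𝒱 ⊆ 𝒰, #𝒱 ≤ κ ∧ Dense (⋃₀ 𝒱)}.Nonempty := by
    refine ⟨max ℵ₀ (2 ^ #X), le_max_left _ _, fun 𝒰 h𝒰 => ⟨𝒰, subset_rfl, ?_, ?_⟩⟩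
    · calc #𝒰 ≤ #(Set X) := mk_set_le 𝒰
        _ = 2 ^ #X := mk_set
        _ ≤ max ℵ₀ (2 ^ #X) := le_max_right _ _
    · rw [h𝒰.2]; exact dense_univ
  exact csInf_mem hne

lemma piCharacter_mem (X : Type u) [TopologicalSpace X] :
    ℵ₀ ≤ piCharacter X ∧ ∀ x : X, ∃ 𝒬 : Set (Set X), #𝒬 ≤ piCharacter X ∧
      (∀ P ∈ 𝒬, IsOpen P ∧ P.Nonempty) ∧
      ∀ U : Set X, IsOpen U → x ∈ U → ∃ P ∈ 𝒬, P ⊆ U := by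
  have hne : {κ : Cardinal.{u} | ℵ₀ ≤ κ ∧ ∀ x : X, ∃ 𝒬 : Set (Set X), #𝒬 ≤ κ ∧
      (∀ P ∈ 𝒬, IsOpen P ∧ P.Nonempty) ∧
      ∀ U : Set X, IsOpen U → x ∈ U → ∃ P ∈ 𝒬, P ⊆ U}.Nonempty := by
    refine ⟨max ℵ₀ (2 ^ #X), le_max_left _ _, fun x =>
      ⟨{P : Set X | IsOpen P ∧ P.Nonempty}, ?_, fun P hP => hP, fun U hU hxU =>
        ⟨U, ⟨hU, ⟨x, hxU⟩⟩, subset_rfl⟩⟩⟩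
    calc #{P : Set X | IsOpen P ∧ P.Nonempty} ≤ #(Set X) := mk_set_le _
      _ = 2 ^ #X := mk_set
      _ ≤ max ℵ₀ (2 ^ #X) := le_max_right _ _
  exact csInf_mem hne

variable {X : Type u} [TopologicalSpace X] [ExtremallyDisconnected X]

lemma ED_disjoint_closure {U V : Set X} (hU : IsOpen U) (hV : IsOpen V)
    (h : Disjoint U V) : Disjoint (closure U) (closure V) := by
  have hclU : IsOpen (closure U) := ExtremallyDisconnected.open_closure U hU
  have h1 : V ⊆ (closure U)ᶜ := by
    intro p hpV hpU
    obtain ⟨q, hqV, hqU⟩ := mem_closure_iff.mp hpU V hV hpV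
    exact (Set.disjoint_left.mp h hqU) hqV
  have h2 : closure V ⊆ (closure U)ᶜ := closure_minimal h1 hclU.isClosed_compl
  exact Set.disjoint_left.mpr fun a haU haV => (h2 haV) haU

/-- Key pointwise lemma: every point has an open neighborhood which meets at most
`κ`-many members of a given cellular family, where `κ` bounds local π-bases. -/
lemma ED_pointwise (𝒰 : Set (Set X)) (h1 : ∀ U ∈ 𝒰, IsOpen U ∧ U.Nonempty)
    (h2 : 𝒰.PairwiseDisjoint id) (κ : Cardinal.{u})
    (𝒬 : Set (Set X)) (hQcard : #𝒬 ≤ κ) (hQopen : ∀ P ∈ 𝒬, IsOpen P ∧ P.Nonempty)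
    (x : X)
    (hQbase : ∀ U : Set X, IsOpen U → x ∈ U → ∃ P ∈ 𝒬, P ⊆ U) :
    ∃ (V : Set X) (𝒜 : Set (Set X)), IsOpen V ∧ x ∈ V ∧ #𝒜 ≤ κ ∧
      ∀ U ∈ 𝒰, (V ∩ U).Nonempty → U ∈ 𝒜 := by
  -- choice function: for each π-base element, a member of 𝒰 whose closure it meets
  set c : Set X → Set X := fun P =>
    if h : ∃ U ∈ 𝒰, (P ∩ closure U).Nonempty then h.choose else ∅ with hc
  -- the refined π-base element
  set r : Set X → Set X := fun P =>
    if ∃ U ∈ 𝒰, (P ∩ closure U).Nonempty then P ∩ closure (c P) else P with hr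
  set 𝒜 : Set (Set X) := c '' 𝒬 with hA
  have hAcard : #𝒜 ≤ κ := le_trans mk_image_le hQcard
  set G : Set X := ⋃₀ (𝒰 \ 𝒜) with hG
  have hGopen : IsOpen G := isOpen_sUnion fun U hU => (h1 U hU.1).1
  have hclG : IsOpen (closure G) := ExtremallyDisconnected.open_closure G hGopen
  set V : Set X := (closure G)ᶜ with hV
  refine ⟨V, 𝒜, isClosed_closure.isOpen_compl, ?_, hAcard, ?_⟩
  · -- x ∈ V
    by_contra hxV
    have hxG : x ∈ closure G := by simpa [hV] using hxV
    obtain ⟨P, hPQ, hPsub⟩ := hQbase (closure G) hclG hxG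
    have hPopen := (hQopen P hPQ).1
    have hPne := (hQopen P hPQ).2
    -- r P is a nonempty open subset of P contained in closure G
    have hrsubP : r P ⊆ P := by
      by_cases h : ∃ U ∈ 𝒰, (P ∩ closure U).Nonempty
      · simp only [hr, if_pos h]; exact Set.inter_subset_left
      · simp only [hr, if_neg h]; exact subset_rfl
    have hrsub : r P ⊆ closure G := hrsubP.trans hPsub
    have hropen : IsOpen (r P) := by
      by_cases h : ∃ U ∈ 𝒰, (P ∩ closure U).Nonempty
      · have hcp : c P = h.choose := dif_pos h
        simp only [hr, if_pos h, hcp]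
        exact hPopen.inter (ExtremallyDisconnected.open_closure _
          (h1 _ h.choose_spec.1).1)
      · simpa [hr, if_neg h] using hPopen
    have hrne : (r P).Nonempty := by
      by_cases h : ∃ U ∈ 𝒰, (P ∩ closure U).Nonempty
      · have hcp : c P = h.choose := dif_pos h
        simp only [hr, if_pos h, hcp]
        exact h.choose_spec.2
      · simpa [hr, if_neg h] using hPne
    -- r P meets G
    obtain ⟨p, hp⟩ := hrne
    obtain ⟨q, hqr, hqG⟩ := mem_closure_iff.mp (hrsub hp) (r P) hropen hp
    obtain ⟨U₀, hU₀, hqU₀⟩ := hqG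
    -- so the choice condition holds for P
    have hex : ∃ U ∈ 𝒰, (P ∩ closure U).Nonempty :=
      ⟨U₀, hU₀.1, ⟨q, hrsubP hqr, subset_closure hqU₀⟩⟩
    have hcP𝒰 : c P ∈ 𝒰 := by
      have hcp : c P = hex.choose := dif_pos hex
      rw [hcp]; exact hex.choose_spec.1
    have hcPA : c P ∈ 𝒜 := ⟨P, hPQ, rfl⟩
    have hne : U₀ ≠ c P := fun h => hU₀.2 (h ▸ hcPA)
    -- r P ⊆ closure (c P), but r P meets U₀ ⊆ closure U₀, contradiction
    have hrP : r P ⊆ closure (c P) := by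
      simp only [hr, if_pos hex]; exact Set.inter_subset_right
    have hdisj : Disjoint (closure U₀) (closure (c P)) :=
      ED_disjoint_closure (h1 _ hU₀.1).1 (h1 _ hcP𝒰).1
        (h2 hU₀.1 hcP𝒰 hne)
    exact Set.disjoint_left.mp hdisj (subset_closure hqU₀) (hrP hqr)
  · -- V meets only members of 𝒜
    intro U hU ⟨p, hpV, hpU⟩
    by_contra hUA
    exact hpV (subset_closure (⟨U, ⟨hU, hUA⟩, hpU⟩ : p ∈ G))

end AuxProof

theorem stmt1 (X : Type u) [TopologicalSpace X] [T2Space X] [ExtremallyDisconnected X] :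
    cellularity X ≤ wLdeg X * piCharacter X := by
  obtain ⟨hwL0, hwL⟩ := wLdeg_mem X
  obtain ⟨hpi0, hpi⟩ := piCharacter_mem X
  have haleph : ℵ₀ ≤ wLdeg X * piCharacter X := by
    calc ℵ₀ ≤ wLdeg X := hwL0
      _ = wLdeg X * 1 := (mul_one _).symm
      _ ≤ wLdeg X * piCharacter X := by
          exact mul_le_mul_right (le_trans (le_of_lt one_lt_aleph0) hpi0) _
  rw [cellularity]
  refine max_le haleph (ciSup_le' ?_)
  rintro ⟨𝒰, h1, h2⟩
  -- For each point, get the neighborhood from the pointwise lemma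
  have hpt : ∀ x : X, ∃ (V : Set X) (𝒜 : Set (Set X)), IsOpen V ∧ x ∈ V ∧
      #𝒜 ≤ piCharacter X ∧ ∀ U ∈ 𝒰, (V ∩ U).Nonempty → U ∈ 𝒜 := by
    intro x
    obtain ⟨𝒬, hQc, hQo, hQb⟩ := hpi x
    exact ED_pointwise 𝒰 h1 h2 (piCharacter X) 𝒬 hQc hQo x hQb
  choose v A hVopen hxV hAcard hAmem using hpt
  -- the open cover by these neighborhoods
  have hcov : IsOpenCover X (Set.range v) := by
    constructor
    · rintro U ⟨x, rfl⟩; exact hVopen x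
    · ext p
      simp only [Set.mem_univ, iff_true, Set.mem_sUnion]
      exact ⟨v p, ⟨p, rfl⟩, hxV p⟩
  obtain ⟨𝒱, h𝒱sub, h𝒱card, h𝒱dense⟩ := hwL (Set.range v) hcov
  -- pick preimage points for members of 𝒱
  have hpre : ∀ W : ↥𝒱, ∃ x : X, v x = W.1 := fun W => h𝒱sub W.2
  choose g hg using hpre
  -- every member of 𝒰 lies in some A (g W)
  have hsub : 𝒰 ⊆ ⋃ W : ↥𝒱, A (g W) := by
    intro U hU
    obtain ⟨q, hqU, hq𝒱⟩ := h𝒱dense.inter_open_nonempty U (h1 U hU).1 (h1 U hU).2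
    obtain ⟨W, hW𝒱, hqW⟩ := hq𝒱
    refine Set.mem_iUnion.mpr ⟨⟨W, hW𝒱⟩, ?_⟩
    exact hAmem (g ⟨W, hW𝒱⟩) U hU ⟨q, by rw [hg ⟨W, hW𝒱⟩]; exact hqW, hqU⟩
  calc #𝒰 ≤ #(⋃ W : ↥𝒱, A (g W)) := mk_le_mk_of_subset hsub
    _ ≤ #(↥𝒱) * ⨆ W : ↥𝒱, #(A (g W)) := mk_iUnion_le _
    _ ≤ wLdeg X * piCharacter X :=
        mul_le_mul' h𝒱card (ciSup_le' fun W => hAcard (g W))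
end

section
/- If X is an extremally disconnected Hausdorff space, then |X| ≤ πχ(X)^(wL(X)·t(X)·ψ_c(X)). -/
open Cardinal Set

universe u

/-!
By Sun's inequality `|X| ≤ πχ(X) ^ (c(X) ψ_c(X))` it suffices to show `c(X) ≤ wL(X) t(X)` when
`X` is extremally disconnected. Given a cellular family `𝒢`, the closures of unions of at most
`t(X)` members of `𝒢` are open and, by tightness, cover `closure (⋃₀ 𝒢)`; together with its
complement they cover `X`, so at most `wL(X)` of them have dense union. Every `G ∈ 𝒢` meets that
union, hence is one of the at most `wL(X) t(X)` members used.

Sun's inequality is a closing-off argument with `κ = c(X) ψ_c(X)`: there is `H` with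
`|H| ≤ πχ(X) ^ κ` that meets the complement of any `≤ κ` closures of unions of `≤ κ` local
π-base elements at points of `H`, whenever this complement is nonempty. For `q ∉ H` and each `W`
in a closed pseudobase at `q`, a maximal disjoint family of local π-base elements at points of `H`
avoiding `W` has at most `c(X)` members, and the closure of its union contains `H \ closure W`
but not `q`. A point of `H` outside these closures then lies in no `closure W`, so it is `q`.
-/

theorem exists_subset_mk_le_and_subset_biUnion {α β : Type u} {f : α → Set β} {s : Set α}
    {t : Set β} (ht : t ⊆ ⋃ i ∈ s, f i) : ∃ s' ⊆ s, #s' ≤ #t ∧ t ⊆ ⋃ i ∈ s', f i := by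
  choose g hgs hg using fun b : t => mem_iUnion₂.1 (ht b.2)
  exact ⟨range g, range_subset_iff.2 hgs, mk_range_le,
    fun b hb => mem_iUnion₂.2 ⟨g ⟨b, hb⟩, mem_range_self _, hg _⟩⟩

theorem mk_bounded_subset_le_of_power_eq {α : Type u} {s : Set α} {κ μ : Cardinal.{u}}
    (hμ : ℵ₀ ≤ μ) (hμκ : μ ^ κ = μ) (hs : #s ≤ μ) : #{t : Set α | t ⊆ s ∧ #t ≤ κ} ≤ μ :=
  (mk_bounded_subset_le s κ).trans (hμκ ▸ power_le_power_right (max_le hs hμ))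

section ClosingOff

variable {X : Type u} (Φ : Set X → Set X)

noncomputable def closingOffStage (o : Ordinal.{u}) : Set X :=
  Φ (⋃ j < o, closingOffStage j)
termination_by o

theorem closingOffStage_eq (o : Ordinal.{u}) :
    closingOffStage Φ o = Φ (⋃ j < o, closingOffStage Φ j) := by
  rw [closingOffStage]

theorem exists_mk_le_forall_subset_of_monotone (hΦ : Monotone Φ) {κ μ : Cardinal.{u}}
    (hκ : ℵ₀ ≤ κ) (hκμ : κ < μ) (hΦμ : ∀ S : Set X, #S ≤ μ → #(Φ S) ≤ μ) :
    ∃ H : Set X, #H ≤ μ ∧ ∀ T ⊆ H, #T ≤ κ → Φ T ⊆ H := by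
  set c := Order.succ κ
  have hcμ : c ≤ μ := Order.succ_le_of_lt hκμ
  have hμ : ℵ₀ ≤ μ := hκ.trans hκμ.le
  have hstage : ∀ o < c.ord, #(closingOffStage Φ o) ≤ μ := by
    intro o
    induction o using WellFoundedLT.induction with | _ o ih => ?_
    intro ho
    rw [closingOffStage_eq]
    exact hΦμ _ <| mk_biUnion_le_of_le ((lt_ord.1 ho).le.trans hcμ) hμ _
      fun j hj => ih j hj (hj.trans ho)
  refine ⟨⋃ o < c.ord, closingOffStage Φ o, mk_biUnion_le_of_le (by rwa [card_ord]) hμ _ hstage,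
    fun T hT hTκ => ?_⟩
  choose idx hidx hmem using fun t : T => mem_iUnion₂.1 (hT t.2)
  -- `c` is regular, so the `≤ κ` stages meeting `T` are bounded below `c.ord`
  have hsup : ⨆ t, idx t + 1 < c.ord := Ordinal.iSup_add_one_lt_of_lt_cof
    (by rwa [(isRegular_succ hκ).cof_ord, Order.lt_succ_iff]) hidx
  have hTstage : T ⊆ ⋃ j < ⨆ t, idx t + 1, closingOffStage Φ j := fun t ht =>
    mem_iUnion₂.2 ⟨idx ⟨t, ht⟩,
      (Order.lt_add_one_iff.2 le_rfl).trans_le (Ordinal.le_iSup (fun t => idx t + 1) _),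
      hmem _⟩
  refine (hΦ hTstage).trans ?_
  rw [← closingOffStage_eq Φ]
  exact subset_iUnion₂ (s := fun o (_ : o < c.ord) => closingOffStage Φ o) _ hsup

end ClosingOff

section CardinalFunctions

variable (X : Type u) [TopologicalSpace X]

theorem wLdeg_spec : ℵ₀ ≤ wLdeg X ∧ ∀ 𝒰 : Set (Set X), IsOpenCover X 𝒰 →
    ∃ 𝒱 ⊆ 𝒰, #𝒱 ≤ wLdeg X ∧ Dense (⋃₀ 𝒱) :=
  (csInf_mem ⟨max ℵ₀ #(Set X), le_max_left _ _, fun 𝒰 h𝒰 =>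
    ⟨𝒰, Subset.rfl, (mk_set_le 𝒰).trans (le_max_right _ _), h𝒰.2 ▸ dense_univ⟩⟩ : wLdeg X ∈ _)

theorem tightness_spec : ℵ₀ ≤ tightness X ∧ ∀ (A : Set X) (x : X), x ∈ closure A →
    ∃ B ⊆ A, #B ≤ tightness X ∧ x ∈ closure B :=
  (csInf_mem ⟨max ℵ₀ #X, le_max_left _ _, fun A _ hx =>
    ⟨A, Subset.rfl, (mk_set_le A).trans (le_max_right _ _), hx⟩⟩ : tightness X ∈ _)

theorem piCharacter_spec : ℵ₀ ≤ piCharacter X ∧ ∀ x : X, ∃ 𝒬 : Set (Set X),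
    #𝒬 ≤ piCharacter X ∧ (∀ P ∈ 𝒬, IsOpen P ∧ P.Nonempty) ∧
    ∀ U : Set X, IsOpen U → x ∈ U → ∃ P ∈ 𝒬, P ⊆ U :=
  (csInf_mem ⟨max ℵ₀ #(Set X), le_max_left _ _, fun x =>
    ⟨{U | IsOpen U ∧ x ∈ U}, (mk_set_le _).trans (le_max_right _ _),
      fun _ hP => ⟨hP.1, x, hP.2⟩, fun U hU hxU => ⟨U, ⟨hU, hxU⟩, Subset.rfl⟩⟩⟩ :
    piCharacter X ∈ _)

theorem iInter_closure_open_nhds_eq_singleton [T2Space X] (x : X) :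
    ⋂ U ∈ {U : Set X | IsOpen U ∧ x ∈ U}, closure U = {x} := by
  refine Subset.antisymm (fun y hy => by_contra fun hyx => ?_)
    (singleton_subset_iff.2 (mem_iInter₂.2 fun U hU => subset_closure hU.2))
  obtain ⟨U, O, hU, hO, hxU, hyO, hUO⟩ := t2_separation (Ne.symm hyx)
  exact (hUO.closure_left hO).notMem_of_mem_left (mem_iInter₂.1 hy U ⟨hU, hxU⟩) hyO

theorem closedPseudoChar_spec [T2Space X] : ℵ₀ ≤ closedPseudoChar X ∧ ∀ x : X,
    ∃ 𝒱 : Set (Set X), #𝒱 ≤ closedPseudoChar X ∧ (∀ V ∈ 𝒱, IsOpen V ∧ x ∈ V) ∧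
    (⋂ V ∈ 𝒱, closure V) = {x} :=
  (csInf_mem ⟨max ℵ₀ #(Set X), le_max_left _ _, fun x =>
    ⟨{U | IsOpen U ∧ x ∈ U}, (mk_set_le _).trans (le_max_right _ _), fun _ hV => hV,
      iInter_closure_open_nhds_eq_singleton X x⟩⟩ : closedPseudoChar X ∈ _)

theorem aleph0_le_cellularity : ℵ₀ ≤ cellularity X := le_max_left _ _

theorem mk_le_cellularity {𝒢 : Set (Set X)} (hopen : ∀ G ∈ 𝒢, IsOpen G ∧ G.Nonempty)
    (hdisj : 𝒢.PairwiseDisjoint id) : #𝒢 ≤ cellularity X :=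
  le_max_of_le_right <| le_ciSup bddAbove_of_small
    (⟨𝒢, hopen, hdisj⟩ : {𝒰 : Set (Set X) // (∀ U ∈ 𝒰, IsOpen U ∧ U.Nonempty) ∧
      𝒰.PairwiseDisjoint id})

theorem cellularity_le {κ : Cardinal.{u}} (hκ : ℵ₀ ≤ κ)
    (h : ∀ 𝒢 : Set (Set X), (∀ G ∈ 𝒢, IsOpen G ∧ G.Nonempty) → 𝒢.PairwiseDisjoint id →
      #𝒢 ≤ κ) :
    cellularity X ≤ κ :=
  max_le hκ <| ciSup_le' fun 𝒢 => h 𝒢.1 𝒢.2.1 𝒢.2.2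

end CardinalFunctions

section Cellularity

variable {X : Type u} [TopologicalSpace X]

theorem exists_pairwiseDisjoint_subset_closure_sUnion {𝒞 : Set (Set X)} {D : Set X}
    (hne : ∀ C ∈ 𝒞, C.Nonempty) (hD : ∀ x ∈ D, ∀ U, IsOpen U → x ∈ U → ∃ C ∈ 𝒞, C ⊆ U) :
    ∃ m ⊆ 𝒞, m.PairwiseDisjoint id ∧ D ⊆ closure (⋃₀ m) := by
  obtain ⟨m, ⟨hm𝒞, hmdisj⟩, hmax⟩ := zorn_subset {m | m ⊆ 𝒞 ∧ m.PairwiseDisjoint id}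
    fun c hc hchain => ⟨⋃₀ c, ⟨sUnion_subset fun m hm => (hc hm).1,
      (hchain.pairwiseDisjoint_sUnion id).2 fun m hm => (hc hm).2⟩,
      fun _ => subset_sUnion_of_mem⟩
  refine ⟨m, hm𝒞, hmdisj, fun x hx => by_contra fun hxm => ?_⟩
  obtain ⟨C, hC, hCm⟩ := hD x hx _ isClosed_closure.isOpen_compl hxm
  have hCdisj : ∀ M ∈ m, Disjoint C M := fun M hM =>
    disjoint_left.2 fun y hyC hyM => hCm hyC (subset_closure ⟨M, hM, hyM⟩)
  have hCm : C ∈ m := hmax ⟨insert_subset hC hm𝒞, hmdisj.insert fun M hM _ => hCdisj M hM⟩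
    (subset_insert _ _) (mem_insert _ _)
  exact (hne C hC).ne_empty (disjoint_self.1 (hCdisj C hCm))

theorem exists_dense_biUnion_mk_le_wLdeg {ι : Type u} {f : ι → Set X}
    (hopen : ∀ i, IsOpen (f i)) (hcover : ⋃ i, f i = Set.univ) :
    ∃ J : Set ι, #J ≤ wLdeg X ∧ Dense (⋃ i ∈ J, f i) := by
  obtain ⟨𝒱, h𝒱f, h𝒱, hdense⟩ :=
    (wLdeg_spec X).2 (range f) ⟨forall_mem_range.2 hopen, by rwa [sUnion_range]⟩
  obtain ⟨J, rfl, hinj⟩ := exists_image_eq_injOn_of_subset_range h𝒱f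
  exact ⟨J, (mk_image_eq_of_injOn f J hinj).ge.trans h𝒱, by rwa [sUnion_image] at hdense⟩

variable (X) in
theorem cellularity_le_wLdeg_mul_tightness [ExtremallyDisconnected X] :
    cellularity X ≤ wLdeg X * tightness X := by
  have ht0 : tightness X ≠ 0 := (aleph0_pos.trans_le (tightness_spec X).1).ne'
  refine cellularity_le X ((wLdeg_spec X).1.trans (le_mul_right ht0)) fun 𝒢 hopen hdisj => ?_
  let ι := {𝒢' : Set (Set X) // 𝒢' ⊆ 𝒢 ∧ #𝒢' ≤ tightness X}
  let f : Option ι → Set X := fun o => o.elim (closure (⋃₀ 𝒢))ᶜ fun 𝒢' => closure (⋃₀ 𝒢'.1)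
  have hf_open : ∀ o, IsOpen (f o) := by
    rintro (_ | 𝒢')
    · exact isClosed_closure.isOpen_compl
    · exact ExtremallyDisconnected.open_closure _
        (isOpen_sUnion fun G hG => (hopen G (𝒢'.2.1 hG)).1)
  have hf_cover : ⋃ o, f o = Set.univ := by
    refine eq_univ_of_forall fun x => ?_
    by_cases hx : x ∈ closure (⋃₀ 𝒢)
    · obtain ⟨A, hA𝒢, hA, hxA⟩ := (tightness_spec X).2 _ x hx
      rw [sUnion_eq_biUnion] at hA𝒢
      obtain ⟨𝒢', h𝒢'𝒢, h𝒢'A, hA𝒢'⟩ := exists_subset_mk_le_and_subset_biUnion hA𝒢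
      exact mem_iUnion.2 ⟨some ⟨𝒢', h𝒢'𝒢, h𝒢'A.trans hA⟩,
        closure_mono (sUnion_eq_biUnion ▸ hA𝒢') hxA⟩
    · exact mem_iUnion.2 ⟨none, hx⟩
  obtain ⟨J, hJ, hdense⟩ := exists_dense_biUnion_mk_le_wLdeg hf_open hf_cover
  have h𝒢J : 𝒢 ⊆ ⋃ o ∈ J, o.elim ∅ Subtype.val := by
    intro G hG
    obtain ⟨x, hxG, hx⟩ := hdense.inter_open_nonempty G (hopen G hG).1 (hopen G hG).2
    obtain ⟨o, hoJ, hxo⟩ := mem_iUnion₂.1 hx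
    rcases o with _ | 𝒢'
    · exact (hxo (subset_closure ⟨G, hG, hxG⟩)).elim
    · -- the open set `G` meets `closure (⋃₀ 𝒢')`, so it meets, hence equals, a member of `𝒢'`
      obtain ⟨y, ⟨G', hG', hyG'⟩, hyG⟩ :=
        (closure_inter_open_nonempty_iff (s := ⋃₀ 𝒢'.1) (hopen G hG).1).1 ⟨x, hxo, hxG⟩
      refine mem_iUnion₂.2 ⟨_, hoJ, ?_⟩
      exact hdisj.elim (𝒢'.2.1 hG') hG (not_disjoint_iff.2 ⟨y, hyG', hyG⟩) ▸ hG'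
  calc #𝒢 ≤ #J * ⨆ o : J, #(o.1.elim ∅ Subtype.val : Set (Set X)) :=
        (mk_le_mk_of_subset h𝒢J).trans (mk_biUnion_le _ _)
    _ ≤ wLdeg X * tightness X := mul_le_mul' hJ <| ciSup_le' fun ⟨o, _⟩ => by
        rcases o with _ | 𝒢'
        · simp
        · exact 𝒢'.2.2

end Cellularity

section Sun

variable {X : Type u} [TopologicalSpace X]

theorem exists_subset_biUnion_subset_closure_sUnion {B : X → Set (Set X)}
    (hBopen : ∀ x, ∀ G ∈ B x, IsOpen G ∧ G.Nonempty)
    (hBbase : ∀ x U, IsOpen U → x ∈ U → ∃ G ∈ B x, G ⊆ U) (H : Set X) {W : Set X}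
    (hW : IsOpen W) :
    ∃ 𝒢 ⊆ ⋃ x ∈ H, B x, #𝒢 ≤ cellularity X ∧ H \ closure W ⊆ closure (⋃₀ 𝒢) ∧
      Disjoint (closure (⋃₀ 𝒢)) W := by
  have hBH : ∀ G ∈ ⋃ x ∈ H, B x, IsOpen G ∧ G.Nonempty := fun G hG =>
    let ⟨x, _, hG⟩ := mem_iUnion₂.1 hG; hBopen x G hG
  obtain ⟨𝒢, h𝒢, hdisj, hcov⟩ := exists_pairwiseDisjoint_subset_closure_sUnion
    (𝒞 := {G | G ∈ ⋃ x ∈ H, B x ∧ Disjoint G W}) (D := H \ closure W)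
    (fun G hG => (hBH G hG.1).2) fun x hx U hU hxU => by
      obtain ⟨G, hG, hGU⟩ := hBbase x _ (hU.inter isClosed_closure.isOpen_compl) ⟨hxU, hx.2⟩
      exact ⟨G, ⟨mem_biUnion hx.1 hG, (disjoint_compl_left.mono_left
        (hGU.trans inter_subset_right)).mono_right subset_closure⟩, hGU.trans inter_subset_left⟩
  exact ⟨𝒢, fun G hG => (h𝒢 hG).1, mk_le_cellularity X (fun G hG => hBH G (h𝒢 hG).1) hdisj,
    hcov, (disjoint_sUnion_left.2 fun G hG => (h𝒢 hG).2).closure_left hW⟩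

def closedUnions (B : X → Set (Set X)) (κ : Cardinal.{u}) (S : Set X) : Set (Set X) :=
  (fun 𝒢 => closure (⋃₀ 𝒢)) '' {𝒢 | 𝒢 ⊆ ⋃ x ∈ S, B x ∧ #𝒢 ≤ κ}

theorem closedUnions_mono (B : X → Set (Set X)) (κ : Cardinal.{u}) :
    Monotone (closedUnions B κ) := fun _ _ hS =>
  image_mono fun _ h𝒢 => ⟨h𝒢.1.trans (biUnion_mono hS fun _ _ => le_rfl), h𝒢.2⟩

/-- A point outside `⋃₀ 𝒜` for each family `𝒜` of at most `κ` sets of `closedUnions B κ S`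
(an arbitrary point when `𝒜` covers `X`). -/
noncomputable def escapePoints [Nonempty X] (B : X → Set (Set X)) (κ : Cardinal.{u})
    (S : Set X) : Set X :=
  (fun 𝒜 : Set (Set X) => Classical.epsilon (· ∉ ⋃₀ 𝒜)) ''
    {𝒜 | 𝒜 ⊆ closedUnions B κ S ∧ #𝒜 ≤ κ}

variable [Nonempty X] (B : X → Set (Set X)) (κ : Cardinal.{u})

theorem escapePoints_mono : Monotone (escapePoints B κ) := fun _ _ hS =>
  image_mono fun _ h𝒜 => ⟨h𝒜.1.trans (closedUnions_mono B κ hS), h𝒜.2⟩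

variable {B κ}

theorem mk_escapePoints_le {μ : Cardinal.{u}} {S : Set X} (hB : ∀ x, #(B x) ≤ μ)
    (hμ : ℵ₀ ≤ μ) (hμκ : μ ^ κ = μ) (hS : #S ≤ μ) : #(escapePoints B κ S) ≤ μ := by
  have hBS : #(⋃ x ∈ S, B x) ≤ μ := calc
    _ ≤ #S * ⨆ x : S, #(B x) := mk_biUnion_le _ _
    _ ≤ μ * μ := mul_le_mul' hS (ciSup_le' fun x => hB x)
    _ = μ := mul_eq_self hμ
  have hκS : #(closedUnions B κ S) ≤ μ :=
    mk_image_le.trans (mk_bounded_subset_le_of_power_eq hμ hμκ hBS)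
  exact mk_image_le.trans (mk_bounded_subset_le_of_power_eq hμ hμκ hκS)

theorem exists_mem_escapePoints_notMem_sUnion {S : Set X} {𝒜 : Set (Set X)}
    (h𝒜 : 𝒜 ⊆ closedUnions B κ S) (h𝒜κ : #𝒜 ≤ κ) {q : X} (hq : q ∉ ⋃₀ 𝒜) :
    ∃ y ∈ escapePoints B κ S, y ∉ ⋃₀ 𝒜 :=
  ⟨_, mem_image_of_mem _ ⟨h𝒜, h𝒜κ⟩, Classical.epsilon_spec (p := (· ∉ ⋃₀ 𝒜)) ⟨q, hq⟩⟩

theorem mem_of_forall_escapePoints_subset (hBopen : ∀ x, ∀ G ∈ B x, IsOpen G ∧ G.Nonempty)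
    (hBbase : ∀ x U, IsOpen U → x ∈ U → ∃ G ∈ B x, G ⊆ U) (hκ : ℵ₀ ≤ κ)
    (hcκ : cellularity X ≤ κ) {H : Set X}
    (hH : ∀ T ⊆ H, #T ≤ κ → escapePoints B κ T ⊆ H) {q : X} {𝒱 : Set (Set X)}
    (h𝒱κ : #𝒱 ≤ κ) (h𝒱open : ∀ W ∈ 𝒱, IsOpen W ∧ q ∈ W) (h𝒱 : ⋂ W ∈ 𝒱, closure W = {q}) :
    q ∈ H := by
  by_contra hqH
  have hfamily : ∀ W : 𝒱, ∃ T ⊆ H, #T ≤ κ ∧ ∃ 𝒢 ⊆ ⋃ x ∈ T, B x, #𝒢 ≤ κ ∧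
      H \ closure W ⊆ closure (⋃₀ 𝒢) ∧ Disjoint (closure (⋃₀ 𝒢)) W := by
    intro W
    obtain ⟨𝒢, h𝒢H, h𝒢c, hcov, hdisj⟩ :=
      exists_subset_biUnion_subset_closure_sUnion hBopen hBbase H (h𝒱open W W.2).1
    obtain ⟨T, hTH, hT𝒢, h𝒢T⟩ := exists_subset_mk_le_and_subset_biUnion h𝒢H
    exact ⟨T, hTH, hT𝒢.trans (h𝒢c.trans hcκ), 𝒢, h𝒢T, h𝒢c.trans hcκ, hcov, hdisj⟩
  choose T hTH hTκ 𝒢 h𝒢T h𝒢κ hcov hdisj using hfamily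
  have hq𝒜 : q ∉ ⋃₀ range fun W : 𝒱 => closure (⋃₀ 𝒢 W) := by
    rintro ⟨_, ⟨W, rfl⟩, hqW⟩
    exact (hdisj W).notMem_of_mem_left hqW (h𝒱open W W.2).2
  have h𝒜 : (range fun W : 𝒱 => closure (⋃₀ 𝒢 W)) ⊆ closedUnions B κ (⋃ W, T W) :=
    range_subset_iff.2 fun W =>
      ⟨𝒢 W, ⟨(h𝒢T W).trans (biUnion_mono (subset_iUnion T W) fun _ _ => le_rfl), h𝒢κ W⟩, rfl⟩
  obtain ⟨y, hy, hy𝒜⟩ := exists_mem_escapePoints_notMem_sUnion h𝒜 (mk_range_le.trans h𝒱κ) hq𝒜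
  have hyH : y ∈ H := hH _ (iUnion_subset hTH) ((mk_iUnion_le _).trans <|
    (mul_le_mul' h𝒱κ (ciSup_le' hTκ)).trans (mul_eq_self hκ).le) hy
  obtain ⟨W, hW, hyW⟩ : ∃ W ∈ 𝒱, y ∉ closure W := by
    by_contra! h
    exact hqH ((h𝒱.subset (mem_iInter₂.2 h) : y = q) ▸ hyH)
  exact hy𝒜 ⟨_, ⟨⟨W, hW⟩, rfl⟩, hcov ⟨W, hW⟩ ⟨hyH, hyW⟩⟩

end Sun

theorem mk_le_piCharacter_pow_cellularity_mul_closedPseudoChar (X : Type u)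
    [TopologicalSpace X] [T2Space X] :
    #X ≤ piCharacter X ^ (cellularity X * closedPseudoChar X) := by
  rcases isEmpty_or_nonempty X with hX | hX
  · simp
  obtain ⟨hπ, hB⟩ := piCharacter_spec X
  choose B hBcard hBopen hBbase using hB
  obtain ⟨hψ, hV⟩ := closedPseudoChar_spec X
  set κ := cellularity X * closedPseudoChar X
  have hψ0 : closedPseudoChar X ≠ 0 := (aleph0_pos.trans_le hψ).ne'
  have hκ : ℵ₀ ≤ κ := (aleph0_le_cellularity X).trans (le_mul_right hψ0)
  set μ := piCharacter X ^ κ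
  have hκμ : κ < μ := (cantor κ).trans_le <|
    power_le_power_right ((natCast_lt_aleph0 (n := 2)).le.trans hπ)
  have hμκ : μ ^ κ = μ := by rw [← power_mul, mul_eq_self hκ]
  have hπμ : piCharacter X ≤ μ := self_le_power _ (one_le_aleph0.trans hκ)
  obtain ⟨H, hHμ, hH⟩ := exists_mk_le_forall_subset_of_monotone _ (escapePoints_mono B κ) hκ hκμ
    fun S hS => mk_escapePoints_le (fun x => (hBcard x).trans hπμ) (hκ.trans hκμ.le) hμκ hS
  have hHX : ∀ q, q ∈ H := fun q => by
    obtain ⟨𝒱, h𝒱, h𝒱open, h𝒱q⟩ := hV q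
    exact mem_of_forall_escapePoints_subset hBopen hBbase hκ (le_mul_right hψ0) hH
      (h𝒱.trans (le_mul_left (aleph0_pos.trans_le (aleph0_le_cellularity X)).ne')) h𝒱open h𝒱q
  calc #X = #(Set.univ : Set X) := mk_univ.symm
    _ ≤ #H := mk_le_mk_of_subset fun q _ => hHX q
    _ ≤ μ := hHμ

theorem stmt2 (X : Type u) [TopologicalSpace X] [T2Space X] [ExtremallyDisconnected X] :
    #X ≤ piCharacter X ^ (wLdeg X * tightness X * closedPseudoChar X) :=
  (mk_le_piCharacter_pow_cellularity_mul_closedPseudoChar X).trans <|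
    power_le_power_left (aleph0_pos.trans_le (piCharacter_spec X).1).ne' <|
      mul_le_mul' (cellularity_le_wLdeg_mul_tightness X) le_rfl
end

section
/- A normal weakly Lindelöf Hausdorff space with a G_δ-diagonal of rank 2 has cardinality at most 2^ℵ₀. -/
open Cardinal Set

universe u

/-!
Distinct points `x ≠ y` are separated by a rank-2 diagonal `(𝒰ₙ)`: for some `n` the stars
`St(x, 𝒰ₙ)` and `St(y, 𝒰ₙ)` are disjoint. Colour each pair of points by such an `n`. If `|X| > 𝔠`,
the Erdős–Rado theorem `(2^ℵ₀)⁺ → (ℵ₁)²_ℵ₀` yields an uncountable `H` and one `n` for which the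
stars of the points of `H` are pairwise disjoint. Then `H` is closed discrete, and normality
shrinks these stars to a disjoint open expansion of `H`; adding the complement of its closure
gives an open cover that in a weakly Lindelöf space forces `H` to be countable.

For Erdős–Rado, a closure argument of length `ω₁` gives a set `M` of size `𝔠` that contains, for
every countable `C ⊆ M`, a realisation of every type `z ↦ (f c z)_{c ∈ C}` realised outside `C`.
Fix `a ∉ M` and choose in `M` an `ω₁`-sequence `(Sₒ)` with `f Sₒ' Sₒ = f Sₒ' a` for `o' < o`; on an
uncountable set of indices `f Sₒ a` is a constant `n`, and then so is `f` on every pair from it.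
-/

open Ordinal

section CountableClosure

variable {α : Type u}

theorem Ordinal.countable_Iio_iff {o : Ordinal.{u}} : (Iio o).Countable ↔ o < ω₁ := by
  rw [← le_aleph0_iff_set_countable, Cardinal.mk_Iio_ordinal, lift_le_aleph0, ← lt_aleph_one_iff,
    ← lt_ord, ord_aleph]

variable (w : (ℕ → α) → Set α) (A : Set α)

def countableClosureStage (i : Ordinal.{u}) : Set α :=
  A ∪ ⋃ s : ℕ → ⋃ j < i, countableClosureStage j, w (fun n => s n)
termination_by i

def countableClosure : Set α := ⋃ i < ω₁, countableClosureStage w A i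

theorem subset_countableClosureStage (i : Ordinal.{u}) : A ⊆ countableClosureStage w A i := by
  rw [countableClosureStage]; exact subset_union_left

theorem apply_subset_countableClosureStage {i : Ordinal.{u}} {s : ℕ → α}
    (hs : ∀ n, s n ∈ ⋃ j < i, countableClosureStage w A j) :
    w s ⊆ countableClosureStage w A i := by
  rw [countableClosureStage]
  exact fun z hz => Or.inr (mem_iUnion.2 ⟨fun n => ⟨s n, hs n⟩, hz⟩)

theorem mk_countableClosureStage_le (hA : #A ≤ 𝔠) (hw : ∀ s, #(w s) ≤ 𝔠) {i : Ordinal.{u}}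
    (hi : i < ω₁) : #(countableClosureStage w A i) ≤ 𝔠 := by
  induction i using WellFoundedLT.induction with
  | _ i IH =>
  set S := ⋃ j < i, countableClosureStage w A j
  have hS : #S ≤ 𝔠 := by
    refine mk_biUnion_le_of_le_lift ?_ aleph0_le_continuum _ fun j hj => IH j hj (hj.trans hi)
    rw [← ord_aleph, lt_ord, lt_aleph_one_iff] at hi
    exact Cardinal.lift_le.2 (hi.trans aleph0_le_continuum)
  have hwS : #(⋃ s : ℕ → S, w (fun n => s n)) ≤ 𝔠 := by
    refine (mk_iUnion_le _).trans ?_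
    calc #(ℕ → S) * ⨆ s : ℕ → S, #(w fun n => s n) ≤ 𝔠 * 𝔠 := by
          gcongr
          · rw [mk_arrow, Cardinal.lift_uzero, mk_nat, lift_aleph0]
            exact (power_le_power_right hS).trans_eq continuum_power_aleph0
          · exact ciSup_le' fun s => hw _
      _ = 𝔠 := continuum_mul_self
  rw [countableClosureStage]
  exact (mk_union_le _ _).trans (add_le_of_le aleph0_le_continuum hA hwS)

theorem subset_countableClosure : A ⊆ countableClosure w A :=
  fun _ hx => mem_iUnion₂.2 ⟨0, omega_pos 1, subset_countableClosureStage w A 0 hx⟩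

theorem apply_subset_countableClosure {s : ℕ → α} (hs : ∀ n, s n ∈ countableClosure w A) :
    w s ⊆ countableClosure w A := by
  simp only [countableClosure, mem_iUnion₂] at hs
  choose j hj hsj using hs
  refine subset_iUnion₂_of_subset (⨆ n, j n + 1)
    (Ordinal.lift_iSup_add_one_lt_of_lt_cof (by simp) hj) ?_
  exact apply_subset_countableClosureStage w A fun n =>
    mem_iUnion₂.2 ⟨j n, lt_iSup_add_one j n, hsj n⟩

theorem mk_countableClosure_le (hA : #A ≤ 𝔠) (hw : ∀ s, #(w s) ≤ 𝔠) :
    #(countableClosure w A) ≤ 𝔠 := by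
  refine mk_biUnion_le_of_le_lift ?_ aleph0_le_continuum _ fun i hi =>
    mk_countableClosureStage_le w A hA hw hi
  rw [card_omega]
  exact Cardinal.lift_le.2 aleph_one_le_continuum

end CountableClosure

section ErdosRado

variable {α : Type u} (f : α → α → ℕ)

def RealizesCountableTypes (M : Set α) : Prop :=
  ∀ C ⊆ M, C.Countable → ∀ a ∉ C, ∃ z ∈ M, z ∉ C ∧ ∀ c ∈ C, f c z = f c a

theorem exists_mk_le_continuum_realizesCountableTypes [Nonempty α] :
    ∃ M : Set α, #M ≤ 𝔠 ∧ RealizesCountableTypes f M := by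
  inhabit α
  let w : (ℕ → α) → Set α := fun s =>
    range fun p : {p : ℕ → ℕ // ∃ z ∉ range s, ∀ k, f (s k) z = p k} => p.2.choose
  have hw (s : ℕ → α) : #(w s) ≤ 𝔠 := by
    refine Cardinal.lift_le.{0}.1 (mk_range_le_lift.trans ?_)
    rw [lift_continuum, ← lift_continuum.{u, 0}, Cardinal.lift_le]
    exact (mk_subtype_le _).trans_eq (by simp)
  have hx : #({default} : Set α) ≤ 𝔠 := by simpa using (nat_lt_continuum 1).le
  refine ⟨countableClosure w {default}, mk_countableClosure_le w _ hx hw, ?_⟩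
  intro C hCM hC a haC
  rcases C.eq_empty_or_nonempty with rfl | hne
  · exact ⟨default, subset_countableClosure w _ rfl, notMem_empty _, by simp⟩
  obtain ⟨s, rfl⟩ := hC.exists_eq_range hne
  let p : {p : ℕ → ℕ // ∃ z ∉ range s, ∀ k, f (s k) z = p k} :=
    ⟨fun k => f (s k) a, a, haC, fun _ => rfl⟩
  obtain ⟨hz, hzf⟩ := p.2.choose_spec
  refine ⟨p.2.choose, apply_subset_countableClosure w _ (fun n => hCM ⟨n, rfl⟩) ⟨p, rfl⟩, hz, ?_⟩
  rintro _ ⟨k, rfl⟩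
  exact hzf k

-- The fallback value `a` is never used below `ω₁`, see `realizingSeq_spec`.
open scoped Classical in
noncomputable def realizingSeq (M : Set α) (a : α) (o : Ordinal.{u}) : α :=
  if h : ∃ z ∈ M, ∀ o' < o,
      realizingSeq M a o' ≠ z ∧ f (realizingSeq M a o') z = f (realizingSeq M a o') a
  then h.choose else a
termination_by o

theorem realizingSeq_spec {M : Set α} (hM : RealizesCountableTypes f M) {a : α} (ha : a ∉ M)
    {o : Ordinal.{u}} (ho : o < ω₁) :
    realizingSeq f M a o ∈ M ∧ ∀ o' < o, realizingSeq f M a o' ≠ realizingSeq f M a o ∧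
      f (realizingSeq f M a o') (realizingSeq f M a o) = f (realizingSeq f M a o') a := by
  induction o using WellFoundedLT.induction with
  | _ o IH =>
  have hC : realizingSeq f M a '' Iio o ⊆ M := by
    rintro _ ⟨o', ho', rfl⟩
    exact (IH o' ho' (ho'.trans ho)).1
  obtain ⟨z, hzM, hzC, hz⟩ :=
    hM _ hC ((countable_Iio_iff.2 ho).image _) a fun haC => ha (hC haC)
  have h : ∃ z ∈ M, ∀ o' < o, realizingSeq f M a o' ≠ z ∧
      f (realizingSeq f M a o') z = f (realizingSeq f M a o') a :=
    ⟨z, hzM, fun o' ho' => ⟨fun he => hzC ⟨o', ho', he⟩, hz _ ⟨o', ho', rfl⟩⟩⟩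
  rw [realizingSeq, dif_pos h]
  exact h.choose_spec

theorem exists_not_countable_pairwise_of_continuum_lt (hα : 𝔠 < #α) :
    ∃ n, ∃ H : Set α, ¬H.Countable ∧ H.Pairwise fun x y => f x y = n ∨ f y x = n := by
  have : Nonempty α := mk_ne_zero_iff.1 (continuum_pos.trans hα).ne'
  obtain ⟨M, hMc, hM⟩ := exists_mk_le_continuum_realizesCountableTypes f
  obtain ⟨a, ha⟩ : ∃ a, a ∉ M := by
    by_contra! h
    rw [eq_univ_of_forall h, mk_univ] at hMc
    exact hMc.not_gt hα
  set S := realizingSeq f M a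
  have hS {o} (ho : o < ω₁) := realizingSeq_spec f hM ha ho
  obtain ⟨n, hn⟩ : ∃ n, ¬{o | o < ω₁ ∧ f (S o) a = n}.Countable := by
    by_contra! h
    refine countable_Iio_iff.not.2 (lt_irrefl ω₁) ((countable_iUnion h).mono fun o ho => ?_)
    exact mem_iUnion.2 ⟨_, ho, rfl⟩
  have hinj : InjOn S {o | o < ω₁ ∧ f (S o) a = n} := by
    intro o₁ ho₁ o₂ ho₂ he
    by_contra hne
    rcases lt_or_gt_of_ne hne with h | h
    · exact ((hS ho₂.1).2 o₁ h).1 he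
    · exact ((hS ho₁.1).2 o₂ h).1 he.symm
  refine ⟨n, S '' {o | o < ω₁ ∧ f (S o) a = n},
    fun h => hn ((mapsTo_image _ _).countable_of_injOn hinj h), ?_⟩
  rintro _ ⟨o₁, ho₁, rfl⟩ _ ⟨o₂, ho₂, rfl⟩ hne
  rcases lt_or_gt_of_ne (ne_of_apply_ne S hne) with h | h
  · exact Or.inl (((hS ho₂.1).2 o₁ h).2.trans ho₁.2)
  · exact Or.inr (((hS ho₁.1).2 o₂ h).2.trans ho₂.2)

end ErdosRado

section Star

variable {X : Type*} {𝒰 : Set (Set X)}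

theorem subset_st_singleton {U : Set X} {x : X} (hU : U ∈ 𝒰) (hx : x ∈ U) : U ⊆ st X {x} 𝒰 :=
  subset_sUnion_of_mem ⟨hU, x, rfl, hx⟩

theorem disjoint_st_singleton_of_notMem {x y : X} (h : y ∉ st X (st X {x} 𝒰) 𝒰) :
    Disjoint (st X {x} 𝒰) (st X {y} 𝒰) := by
  rw [disjoint_left]
  rintro z hzx ⟨U, ⟨hU, _, rfl, hyU⟩, hzU⟩
  exact h ⟨U, ⟨hU, z, hzx, hzU⟩, hyU⟩

theorem exists_disjoint_st_singleton {𝒰 : ℕ → Set (Set X)}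
    (hdiag : ∀ x : X, ⋂ n, st X (st X {x} (𝒰 n)) (𝒰 n) = {x}) {x y : X} (hxy : x ≠ y) :
    ∃ n, Disjoint (st X {x} (𝒰 n)) (st X {y} (𝒰 n)) := by
  have hy : y ∉ ⋂ n, st X (st X {x} (𝒰 n)) (𝒰 n) := by
    rw [hdiag x]
    exact hxy.symm
  obtain ⟨n, hn⟩ := not_forall.1 (mt mem_iInter.2 hy)
  exact ⟨n, disjoint_st_singleton_of_notMem hn⟩

variable [TopologicalSpace X]

theorem isOpen_st (h𝒰 : IsOpenCover X 𝒰) (A : Set X) : IsOpen (st X A 𝒰) :=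
  isOpen_sUnion fun U hU => h𝒰.1 U hU.1

theorem IsOpenCover.exists_mem (h𝒰 : IsOpenCover X 𝒰) (x : X) : ∃ U ∈ 𝒰, x ∈ U :=
  mem_sUnion.1 (h𝒰.2.symm ▸ mem_univ x)

theorem IsOpenCover.mem_st_singleton (h𝒰 : IsOpenCover X 𝒰) (x : X) : x ∈ st X {x} 𝒰 :=
  let ⟨_, hU, hxU⟩ := h𝒰.exists_mem x
  subset_st_singleton hU hxU hxU

theorem isClosed_of_pairwiseDisjoint_st [T1Space X] (h𝒰 : IsOpenCover X 𝒰) {H : Set X}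
    (hH : H.PairwiseDisjoint fun x => st X {x} 𝒰) : IsClosed H := by
  have hfin : LocallyFinite fun x : H => ({x.1} : Set X) := by
    intro y
    obtain ⟨U, hU, hyU⟩ := h𝒰.exists_mem y
    refine ⟨U, (h𝒰.1 U hU).mem_nhds hyU, Subsingleton.finite ?_⟩
    rintro x ⟨_, rfl, hxU⟩ x' ⟨_, rfl, hx'U⟩
    exact Subtype.ext (hH.elim_set x.2 x'.2 y (subset_st_singleton hU hxU hyU)
      (subset_st_singleton hU hx'U hyU))
  simpa using hfin.isClosed_iUnion fun _ => isClosed_singleton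

end Star

theorem WeaklyLindelof.countable_of_isClosed_of_pairwiseDisjoint {X : Type*}
    [TopologicalSpace X] [NormalSpace X] (hX : WeaklyLindelof X) {H : Set X} (hH : IsClosed H)
    {V : X → Set X} (hV : ∀ x ∈ H, IsOpen (V x)) (hxV : ∀ x ∈ H, x ∈ V x)
    (hdisj : H.PairwiseDisjoint V) : H.Countable := by
  obtain ⟨O, hO, hHO, hOV⟩ := normal_exists_closure_subset hH (isOpen_biUnion hV)
    fun x hx => mem_biUnion hx (hxV x hx)
  have hcov : IsOpenCover X (insert (closure O)ᶜ (V '' H)) := by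
    refine ⟨?_, eq_univ_of_forall fun y => ?_⟩
    · rintro _ (rfl | ⟨x, hx, rfl⟩)
      exacts [isClosed_closure.isOpen_compl, hV x hx]
    · by_cases hy : y ∈ closure O
      · obtain ⟨x, hx, hyx⟩ := mem_iUnion₂.1 (hOV hy)
        exact ⟨V x, mem_insert_of_mem _ (mem_image_of_mem V hx), hyx⟩
      · exact ⟨_, mem_insert _ _, hy⟩
  obtain ⟨𝒱, h𝒱, h𝒱c, h𝒱d⟩ := hX _ hcov
  have hmem : MapsTo V H 𝒱 := by
    intro x hx
    obtain ⟨z, ⟨hzV, hzO⟩, W, hW𝒱, hzW⟩ :=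
      h𝒱d.inter_open_nonempty _ ((hV x hx).inter hO) ⟨x, hxV x hx, hHO hx⟩
    rcases h𝒱 hW𝒱 with rfl | ⟨x', hx', rfl⟩
    · exact absurd (subset_closure hzO) hzW
    · rwa [← hdisj.elim_set hx hx' z hzV hzW] at hW𝒱
  refine hmem.countable_of_injOn (fun x hx x' hx' he => ?_) h𝒱c
  exact hdisj.elim_set hx hx' x (hxV x hx) (he ▸ hxV x hx)

theorem stmt10 (X : Type u) [TopologicalSpace X] [T2Space X] [NormalSpace X]
    (hwL : WeaklyLindelof X) (hd : HasRank2Diagonal X) :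
    #X ≤ 2 ^ ℵ₀ := by
  rw [two_power_aleph0]
  by_contra! hX
  obtain ⟨𝒰, h𝒰, hdiag⟩ := hd
  choose! c hc using fun x y (hxy : x ≠ y) => exists_disjoint_st_singleton hdiag hxy
  obtain ⟨n, H, hH, hHc⟩ := exists_not_countable_pairwise_of_continuum_lt c hX
  have hdisj : H.PairwiseDisjoint fun x => st X {x} (𝒰 n) := fun x hx y hy hxy =>
    (hHc hx hy hxy).elim (fun h => h ▸ hc x y hxy) fun h => (h ▸ hc y x hxy.symm).symm
  exact hH (hwL.countable_of_isClosed_of_pairwiseDisjoint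
    (isClosed_of_pairwiseDisjoint_st (h𝒰 n) hdisj) (fun _ _ => isOpen_st (h𝒰 n) _)
    (fun x _ => (h𝒰 n).mem_st_singleton x) hdisj)
end
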